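/- Let p be prime and L = X^{p^{n'}} - (a_ℓ X^{p^ℓ} + ... + a_0 X) a linearized polynomial over F_{p^n} with 1 ≤ ℓ and a_ℓ ≠ 0. If L splits completely over F_{p^n}, then ℓ·n/n'^2 ≥ 3/4. -/

import Mathlib

/-!
Write `T = ∑ a_i X^(p^i)`, so every root `x` of `L` satisfies `x^(p^n') = T(x)` and also
`x^(p^n) = x`. Twisting the coefficients of `T` by powers of Frobenius and composing gives
polynomials `F_k` of degree `p^(kℓ)` with `F_k(x) = x^(p^(k n'))` on the roots. Hence whenever
`k n' + s = n + r`, the polynomial `X^(p^r) - F_k^(p^s)` vanishes on all `p^n'` roots, and if its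
degree `p^(s + kℓ)` beats `p^r` we get `n' ≤ s + kℓ`. For `k = ⌊(n' - 1)/ℓ⌋` these bounds give,
by induction, `k n' ≤ n` and `(k + 1) n' ≤ n + kℓ`, and AM-GM turns them into `4ℓn ≥ 3n'^2`.
-/

open Polynomial

namespace Polynomial

section TwistedIterate

variable {R : Type*} [CommRing R] (p : ℕ) [ExpChar R p]

/-- `F_{k+1} = T^(σ^(k m)) ∘ F_k` for the Frobenius `σ`; the twist makes `F_k` agree with
`x ↦ x^(p^(k m))` on the roots of `X^(p^m) - T`. -/
noncomputable def twistedIterate (T : R[X]) (m : ℕ) : ℕ → R[X]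
  | 0 => X
  | k + 1 => (T.map (iterateFrobenius R p (k * m))).comp (twistedIterate T m k)

theorem eval_twistedIterate {T : R[X]} {m : ℕ} {x : R} (hx : x ^ p ^ m = T.eval x) (k : ℕ) :
    (twistedIterate p T m k).eval x = x ^ p ^ (k * m) := by
  induction k with
  | zero => simp [twistedIterate]
  | succ k ih =>
    rw [twistedIterate, eval_comp, ih, eval_map, ← iterateFrobenius_def, eval₂_at_apply, ← hx,
      iterateFrobenius_def, ← pow_mul, ← pow_add, add_one_mul, add_comm]

theorem natDegree_twistedIterate [IsDomain R] (T : R[X]) (m k : ℕ) :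
    (twistedIterate p T m k).natDegree = T.natDegree ^ k := by
  induction k with
  | zero => simp [twistedIterate]
  | succ k ih =>
    rw [twistedIterate, natDegree_comp,
      natDegree_map_eq_of_injective (iterateFrobenius_inj R p _), ih, pow_succ']

end TwistedIterate

theorem ncard_le_natDegree_of_eval_eq_zero {R : Type*} [CommRing R] [IsDomain R] {H : R[X]}
    (hH : H ≠ 0) {V : Set R} (hV : ∀ x ∈ V, H.eval x = 0) : V.ncard ≤ H.natDegree := by
  have hsub : V ⊆ H.rootSet R := fun x hx =>
    (mem_rootSet_of_ne (by simpa using hH)).2 (by simpa using hV x hx)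
  exact (Set.ncard_le_ncard hsub (rootSet_finite H R)).trans (ncard_rootSet_le H R)

theorem natDegree_sum_C_mul_X_pow_pow {R : Type*} [Semiring R] {p ℓ : ℕ} {a : ℕ → R}
    (hp : 1 < p) (ha : a ℓ ≠ 0) :
    (∑ i ∈ Finset.range (ℓ + 1), C (a i) * X ^ p ^ i).natDegree = p ^ ℓ := by
  have hlow : (∑ i ∈ Finset.range ℓ, C (a i) * X ^ p ^ i).natDegree < p ^ ℓ := by
    refine (natDegree_sum_le_of_forall_le _ _ fun i hi => ?_).trans_lt
      (Nat.sub_one_lt (pow_pos (by omega) ℓ).ne')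
    exact (natDegree_C_mul_X_pow_le _ _).trans
      (Nat.le_sub_one_of_lt (Nat.pow_lt_pow_right hp (Finset.mem_range.1 hi)))
  rw [Finset.sum_range_succ, natDegree_add_eq_right_of_natDegree_lt, natDegree_C_mul_X_pow _ _ ha]
  rwa [natDegree_C_mul_X_pow _ _ ha]

end Polynomial

theorem le_add_mul_of_pow_eq_eval {K : Type*} [Field K] {p : ℕ} [ExpChar K p] (hp : 1 < p)
    {T : K[X]} {V : Set K} {n m ℓ : ℕ} (hT : T.natDegree = p ^ ℓ) (hV : V.ncard = p ^ m)
    (hVT : ∀ x ∈ V, x ^ p ^ m = T.eval x) (hVn : ∀ x ∈ V, x ^ p ^ n = x)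
    {k r s : ℕ} (hkrs : k * m + s = n + r) (hr : r < s + k * ℓ) : m ≤ s + k * ℓ := by
  set H : K[X] := X ^ p ^ r - twistedIterate p T m k ^ p ^ s
  have hH : H.natDegree = p ^ (s + k * ℓ) := by
    have hF : (twistedIterate p T m k ^ p ^ s).natDegree = p ^ (s + k * ℓ) := by
      rw [natDegree_pow, natDegree_twistedIterate, hT, ← pow_mul, ← pow_add, mul_comm ℓ]
    have hlt : (X ^ p ^ r : K[X]).natDegree < (twistedIterate p T m k ^ p ^ s).natDegree := by
      rw [hF, natDegree_X_pow]
      exact Nat.pow_lt_pow_right hp hr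
    rw [natDegree_sub_eq_right_of_natDegree_lt hlt, hF]
  have hH0 : H ≠ 0 := fun h => by
    rw [h, natDegree_zero] at hH
    exact (pow_pos (by omega : 0 < p) _).ne hH
  have hvanish : ∀ x ∈ V, H.eval x = 0 := fun x hx => by
    rw [eval_sub, eval_pow, eval_X, eval_pow, eval_twistedIterate p (hVT x hx), ← pow_mul,
      ← pow_add, hkrs, pow_add, pow_mul, hVn x hx, sub_self]
  have := hV ▸ hH ▸ ncard_le_natDegree_of_eval_eq_zero hH0 hvanish
  exact (Nat.pow_le_pow_iff_right hp).1 this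

section ExponentArithmetic

variable {n m ℓ : ℕ}

theorem succ_mul_le_add_mul (hn : 0 < n) (hℓ : 0 < ℓ)
    (h : ∀ k r s : ℕ, k * m + s = n + r → r < s + k * ℓ → m ≤ s + k * ℓ)
    {k : ℕ} (hk : k * m ≤ n) : (k + 1) * m ≤ n + k * ℓ := by
  have hpos : 0 < n - k * m + k * ℓ := by
    rcases k.eq_zero_or_pos with rfl | hk0
    · simpa using hn
    · exact Nat.add_pos_right _ (Nat.mul_pos hk0 hℓ)
  have := h k 0 (n - k * m) (by omega) hpos
  rw [add_one_mul]
  omega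

theorem mul_le_of_mul_lt (hn : 0 < n) (hℓ : 0 < ℓ)
    (h : ∀ k r s : ℕ, k * m + s = n + r → r < s + k * ℓ → m ≤ s + k * ℓ)
    {k : ℕ} (hk : k * ℓ < m) : k * m ≤ n := by
  induction k with
  | zero => simp
  | succ k ih =>
    rw [add_one_mul] at hk ⊢
    have hstep := succ_mul_le_add_mul hn hℓ h (ih (by omega))
    rw [add_one_mul] at hstep
    by_contra! hlt
    have := h (k + 1) (k * m + m - n) 0 (by rw [add_one_mul]; omega) (by rw [add_one_mul]; omega)
    rw [add_one_mul] at this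
    omega

theorem three_mul_sq_le (hn : 0 < n) (hℓ : 0 < ℓ) (hℓm : ℓ < m)
    (h : ∀ k r s : ℕ, k * m + s = n + r → r < s + k * ℓ → m ≤ s + k * ℓ) :
    3 * m ^ 2 ≤ 4 * (ℓ * n) := by
  have hdiv := Nat.div_mul_le_self (m - 1) ℓ
  have hdivmod := Nat.div_add_mod' (m - 1) ℓ
  have hmod := Nat.mod_lt (m - 1) hℓ
  set k := (m - 1) / ℓ
  have hk : k * ℓ < m := by omega
  have hk' : m ≤ k * ℓ + ℓ := by omega
  have hstep := succ_mul_le_add_mul hn hℓ h (mul_le_of_mul_lt hn hℓ h hk)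
  have hstep' : (k * ℓ + ℓ : ℤ) * m ≤ ℓ * n + k * ℓ * ℓ := by
    have : (((k + 1) * m : ℕ) : ℤ) * ℓ ≤ ((n + k * ℓ : ℕ) : ℤ) * ℓ := by gcongr
    push_cast at this; linarith
  zify at hk hk' ⊢
  -- m² - 4(m - kℓ)(m - ℓ) = (kℓ - ℓ)² + (kℓ + ℓ - m)(3m - kℓ - ℓ)
  nlinarith [sq_nonneg ((k * ℓ : ℤ) - ℓ),
    mul_nonneg (sub_nonneg.2 hk') (by linarith : (0 : ℤ) ≤ 3 * m - k * ℓ - ℓ)]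

end ExponentArithmetic

theorem stmt_5 (p n n' ℓ : ℕ) [Fact p.Prime] (hn : 0 < n) (hℓ : 1 ≤ ℓ) (hn' : ℓ < n')
    (a : ℕ → GaloisField p n) (ha : a ℓ ≠ 0)
    (L : Polynomial (GaloisField p n))
    (hL : L = Polynomial.X ^ (p ^ n') -
      ∑ i ∈ Finset.range (ℓ + 1), Polynomial.C (a i) * Polynomial.X ^ (p ^ i))
    (hroots : {x : GaloisField p n | Polynomial.eval x L = 0}.ncard = p ^ n') :
    (ℓ : ℚ) * (n : ℚ) / (n' : ℚ) ^ 2 ≥ 3 / 4 := by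
  have hp : 1 < p := (Fact.out : p.Prime).one_lt
  have hroot : ∀ x ∈ {x : GaloisField p n | eval x L = 0},
      x ^ p ^ n' = eval x (∑ i ∈ Finset.range (ℓ + 1), C (a i) * X ^ p ^ i) := fun x hx => by
    rwa [Set.mem_ofPred_eq, hL, eval_sub, eval_pow, eval_X, sub_eq_zero] at hx
  have hfix : ∀ x : GaloisField p n, x ^ p ^ n = x := fun x => by
    have := Fintype.ofFinite (GaloisField p n)
    rw [← GaloisField.card p n hn.ne', Nat.card_eq_fintype_card]
    exact FiniteField.pow_card x
  have key : 3 * n' ^ 2 ≤ 4 * (ℓ * n) := three_mul_sq_le hn hℓ hn' fun _ _ _ =>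
    le_add_mul_of_pow_eq_eval hp (natDegree_sum_C_mul_X_pow_pow hp ha) hroots hroot
      fun x _ => hfix x
  have hn'0 : (0 : ℚ) < n' := by exact_mod_cast (Nat.zero_lt_of_lt hn')
  rw [ge_iff_le, div_le_div_iff₀ (by norm_num) (by positivity)]
  exact_mod_cast (by linarith : 3 * n' ^ 2 ≤ ℓ * n * 4)
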